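/- Let f : ℂ → ℂ be an entire function (holomorphic on all of ℂ) that is not a polynomial. Then for every r > 0 and every R > 0 there exists (x,y) ∈ ℂ² with max{|x|,|y|} ≥ R such that the Gaussian measure of the set {t ∈ ℂ : |x + t·f(y)| < r} is at least γ({t ∈ ℂ : |t| ≤ 1}). (That is, the family of maps π_t(x,y) = x + t·f(y), parametrized by t in ℂ with the Gaussian measure, is not a spreading family.) -/

import Mathlib

/-!
Take `x = 0`: the set `{t | ‖t * f y‖ < r}` contains the closed unit disc as soon as `‖f y‖ < r`,
so it suffices that a non-polynomial entire function is arbitrarily small arbitrarily far out.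
If instead `‖f‖ ≥ r` near infinity, then `z ↦ (f z⁻¹)⁻¹` is bounded and holomorphic on a punctured
disc, so it extends holomorphically over `0`, where it vanishes to some finite order `n`. Hence
`f = O(zⁿ)` at infinity, and an entire function of polynomial growth is a polynomial: its
difference quotient at `0` grows one order slower, and Liouville's theorem ends the induction.
-/

open MeasureTheory Polynomial

/-- The standard Gaussian probability measure on ℂ ≅ ℝ²:
    γ(U) = (1/(2π)) ∫_U e^{−|w|²/2} dλ(w). -/
noncomputable def gaussianMeasureC : Measure ℂ :=
  MeasureTheory.volume.withDensity
    (fun w => ENNReal.ofReal ((2 * Real.pi)⁻¹ * Real.exp (-‖w‖ ^ 2 / 2)))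

open Filter Topology Asymptotics Bornology Function

theorem Differentiable.exists_polynomial_of_isBigO_pow {f : ℂ → ℂ} (hf : Differentiable ℂ f)
    {n : ℕ} (hO : f =O[cobounded ℂ] (· ^ n)) : ∃ p : ℂ[X], ∀ z, f z = p.eval z := by
  induction n generalizing f with
  | zero =>
    have hb : IsBounded (Set.range f) := by
      rw [hf.continuous.isBounded_range_iff_isBigO, ← Metric.cobounded_eq_cocompact, Pi.one_def,
        isBigO_one_iff]
      simpa using hO
    exact ⟨C (f 0), fun z => by simp [hf.apply_eq_apply_of_bounded hb z 0]⟩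
  | succ n ih =>
    have hg : Differentiable ℂ (dslope f 0) := fun z =>
      (Complex.differentiableOn_dslope univ_mem |>.2 hf.differentiableOn).differentiableAt
        univ_mem
    have hconst : (fun _ => f 0) =O[cobounded ℂ] (· ^ (n + 1)) :=
      (isLittleO_const_left.2 <| .inr <| by
        simpa [comp_def] using
          (tendsto_pow_atTop n.succ_ne_zero).comp tendsto_norm_cobounded_atTop).isBigO
    have hgO : dslope f 0 =O[cobounded ℂ] (· ^ n) := by
      refine ((isBigO_refl (·⁻¹) _).mul (hO.sub hconst)).congr' ?_ ?_ <;>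
        filter_upwards [eventually_ne_cobounded 0] with z hz
      · rw [dslope_of_ne _ hz, slope_def_field, sub_zero, div_eq_inv_mul]
      · rw [pow_succ, mul_comm, mul_inv_cancel_right₀ hz]
    obtain ⟨p, hp⟩ := ih hg hgO
    refine ⟨C (f 0) + X * p, fun z => ?_⟩
    have := sub_smul_dslope f 0 z
    rw [sub_zero, smul_eq_mul, hp z] at this
    simp only [eval_add, eval_C, eval_mul, eval_X]
    linear_combination -this

theorem AnalyticAt.exists_inv_comp_inv_isBigO_pow {h : ℂ → ℂ} (hh : AnalyticAt ℂ h 0)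
    (hne : ¬ ∀ᶠ z in 𝓝 0, h z = 0) :
    ∃ n : ℕ, (fun w => (h w⁻¹)⁻¹) =O[cobounded ℂ] (· ^ n) := by
  obtain ⟨n, k, hk, hk0, hhk⟩ := hh.exists_eventuallyEq_pow_smul_nonzero_iff.2 hne
  have hlim : Tendsto (fun w => (k w⁻¹)⁻¹) (cobounded ℂ) (𝓝 (k 0)⁻¹) :=
    (hk.continuousAt.tendsto.comp tendsto_inv₀_cobounded).inv₀ hk0
  refine ⟨n, EventuallyEq.trans_isBigO ?_ <| by
    simpa using (isBigO_refl (· ^ n) _).mul (hlim.isBigO_one ℂ)⟩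
  filter_upwards [tendsto_inv₀_cobounded.eventually hhk] with w hw
  rw [hw, sub_zero, smul_eq_mul, mul_inv, inv_pow, inv_inv]

theorem Differentiable.frequently_norm_lt_of_not_polynomial {f : ℂ → ℂ} (hf : Differentiable ℂ f)
    (hnp : ¬ ∃ p : ℂ[X], ∀ z, f z = p.eval z) {r : ℝ} (hr : 0 < r) :
    ∃ᶠ y in cobounded ℂ, ‖f y‖ < r := by
  refine fun hbig => hnp ?_
  simp only [not_lt] at hbig
  set s := {z : ℂ | z ≠ 0 → r ≤ ‖f z⁻¹‖}
  have hs : s ∈ 𝓝 0 := eventually_nhdsWithin_iff.1 (tendsto_inv₀_nhdsNE_zero.eventually hbig)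
  have hfne : ∀ z ∈ s \ {0}, f z⁻¹ ≠ 0 := fun z hz => norm_pos_iff.1 (hr.trans_le (hz.1 hz.2))
  set g : ℂ → ℂ := fun z => (f z⁻¹)⁻¹
  have hgd : DifferentiableOn ℂ g (s \ {0}) := fun z hz =>
    ((hf _).comp z (differentiableAt_inv hz.2) |>.inv (hfne z hz)).differentiableWithinAt
  have hgb : BddAbove ((‖·‖) ∘ g '' (s \ {0})) := by
    refine ⟨r⁻¹, ?_⟩
    rintro _ ⟨z, hz, rfl⟩
    simpa [g] using inv_anti₀ hr (hz.1 hz.2)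
  set h := update g 0 (limUnder (𝓝[≠] 0) g)
  have hh : AnalyticAt ℂ h 0 :=
    (Complex.differentiableOn_update_limUnder_of_bddAbove hs hgd hgb).analyticAt hs
  have hhg : ∀ z ≠ 0, h z = (f z⁻¹)⁻¹ := fun z hz => update_of_ne hz _ _
  have hhne : ¬ ∀ᶠ z in 𝓝 0, h z = 0 := fun hzero => by
    obtain ⟨z, hz, hzs⟩ := ((eventually_nhdsWithin_of_eventually_nhds hzero).and
      (sdiff_mem_nhdsWithin_compl hs {0})).exists
    rw [hhg z hzs.2] at hz
    exact hfne z hzs (inv_eq_zero.1 hz)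
  obtain ⟨n, hn⟩ := hh.exists_inv_comp_inv_isBigO_pow hhne
  refine hf.exists_polynomial_of_isBigO_pow (EventuallyEq.trans_isBigO ?_ hn)
  filter_upwards [eventually_ne_cobounded 0] with w hw
  rw [hhg _ (inv_ne_zero hw), inv_inv, inv_inv]

theorem stmt12 (f : ℂ → ℂ) (hf : Differentiable ℂ f)
    (hnp : ¬ ∃ p : Polynomial ℂ, ∀ z : ℂ, f z = p.eval z) :
    ∀ r : ℝ, 0 < r → ∀ R : ℝ, 0 < R → ∃ x y : ℂ,
      R ≤ max ‖x‖ ‖y‖ ∧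
      gaussianMeasureC {t : ℂ | ‖t‖ ≤ 1} ≤
        gaussianMeasureC {t : ℂ | ‖x + t * f y‖ < r} := by
  intro r hr R _
  obtain ⟨y, hfy, hyR⟩ := ((hf.frequently_norm_lt_of_not_polynomial hnp hr).and_eventually
    (tendsto_norm_cobounded_atTop.eventually_ge_atTop R)).exists
  refine ⟨0, y, hyR.trans (le_max_right _ _), measure_mono fun t (ht : ‖t‖ ≤ 1) => ?_⟩
  calc ‖0 + t * f y‖ = ‖t‖ * ‖f y‖ := by rw [zero_add, norm_mul]
    _ ≤ ‖f y‖ := mul_le_of_le_one_left (norm_nonneg _) ht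
    _ < r := hfy
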